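/- Let p, q > 0 and let r, s, θ ∈ ℝ with r ∉ {−1, −2}. Let (u, v) be a positive classical solution of the Lane–Emden system −Δu = v^p, −Δv = u^q on ℝ^n. Then for every nonnegative φ ∈ C_c²(ℝ^n): (1/(r+1)) ∫ u^{r+1} v^{p+s} φ + μ₁ ∫ u^{r+2} v^{s−2} |∇v|² φ ≥ μ₂ ∫ u^{r+q+2} v^{s−1} φ + I₄, where μ₁ = s(s−1)/((r+1)(r+2)) + (2θ/(r+2))(θ + s + θr/2 − 1), μ₂ = (1/(r+2))(2θ + s/(r+1)), and I₄ = I₃ − I₂ with I₃ = −(2θ/(r+2)) ∫ u^{r+2} v^{s−1} (∇v·∇φ) and I₂ = −(1/(r+1)) ∫ u^{r+1} v^s (∇u·∇φ) + (s/((r+1)(r+2))) ∫ u^{r+2} v^{s−1} (∇v·∇φ), all integrals being over ℝ^n. -/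

import Mathlib

/-!
Test `-Δu = v^p` against `u^(r+1) v^s φ` and `-Δv = u^q` against `u^(r+2) v^(s-1) φ`.
Integrating by parts, both left-hand sides become combinations of
`A = ∫ u^r v^s |∇u|² φ`, `J = ∫ u^(r+1) v^(s-1) ∇u·∇v φ`, `B = ∫ u^(r+2) v^(s-2) |∇v|² φ`
and of the terms against `∇φ`. With the coefficients of the statement, the difference of the
two sides is exactly `A - 2θJ + θ²B = ∫ u^r v^(s-2) φ |v∇u - θu∇v|² ≥ 0`.
-/

open MeasureTheory Real
open scoped InnerProductSpace

/-- The Laplacian of a function `f : ℝⁿ → ℝ`, as the sum of its second partial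
derivatives. -/
noncomputable def lap {n : ℕ} (f : EuclideanSpace ℝ (Fin n) → ℝ)
    (x : EuclideanSpace ℝ (Fin n)) : ℝ :=
  ∑ i : Fin n, fderiv ℝ (fun y => fderiv ℝ f y (EuclideanSpace.single i 1)) x
    (EuclideanSpace.single i 1)

theorem integral_mul_fderiv_eq_neg_fderiv_mul_of_hasCompactSupport
    {F : Type*} [NormedAddCommGroup F] [NormedSpace ℝ F] [FiniteDimensional ℝ F]
    [MeasurableSpace F] [BorelSpace F]
    {μ : Measure F} [μ.IsAddHaarMeasure] {ψ g : F → ℝ} (hψ : ContDiff ℝ 1 ψ)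
    (hψc : HasCompactSupport ψ) (hg : ContDiff ℝ 1 g) (w : F) :
    ∫ x, ψ x * fderiv ℝ g x w ∂μ = -∫ x, fderiv ℝ ψ x w * g x ∂μ := by
  have hψ' : Continuous fun x => fderiv ℝ ψ x w :=
    (hψ.continuous_fderiv one_ne_zero).clm_apply continuous_const
  have hg' : Continuous fun x => fderiv ℝ g x w :=
    (hg.continuous_fderiv one_ne_zero).clm_apply continuous_const
  exact integral_mul_fderiv_eq_neg_fderiv_mul_of_integrable
    ((hψ'.mul hg.continuous).integrable_of_hasCompactSupport (hψc.fderiv_apply ℝ w).mul_right)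
    ((hψ.continuous.mul hg').integrable_of_hasCompactSupport hψc.mul_right)
    ((hψ.continuous.mul hg.continuous).integrable_of_hasCompactSupport hψc.mul_right)
    (fun x _ => (hψ.differentiable one_ne_zero) x) (fun x _ => (hg.differentiable one_ne_zero) x)

section

variable {n : ℕ}

local notation "E" => EuclideanSpace ℝ (Fin n)

theorem gradient_apply_eq_fderiv_single (f : E → ℝ) (x : E) (i : Fin n) :
    gradient f x i = fderiv ℝ f x (EuclideanSpace.single i 1) := by
  rw [← inner_gradient_left, EuclideanSpace.inner_single_right, conj_trivial, one_mul]

theorem ContDiff.continuous_gradient {f : E → ℝ} (hf : ContDiff ℝ 1 f) :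
    Continuous (gradient f) :=
  (InnerProductSpace.toDual ℝ E).symm.continuous.comp (hf.continuous_fderiv one_ne_zero)

theorem HasCompactSupport.gradient {f : E → ℝ} (hf : HasCompactSupport f) :
    HasCompactSupport (_root_.gradient f) :=
  (hf.fderiv ℝ).comp_left (g := (InnerProductSpace.toDual ℝ E).symm) (map_zero _)

theorem HasCompactSupport.mul_inner_gradient {f : E → ℝ} (hf : HasCompactSupport f)
    (c : E → ℝ) (w : E → E) :
    HasCompactSupport fun x => c x * ⟪w x, _root_.gradient f x⟫_ℝ :=
  hf.gradient.mono fun x hx h0 => hx (by simp [h0])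

theorem integral_lap_mul_eq_neg_integral_inner_gradient {f ψ : E → ℝ} (hf : ContDiff ℝ 2 f)
    (hψ : ContDiff ℝ 1 ψ) (hψc : HasCompactSupport ψ) :
    ∫ x, lap f x * ψ x = -∫ x, ⟪gradient f x, gradient ψ x⟫_ℝ := by
  set e : Fin n → E := fun i => EuclideanSpace.single i 1
  have hpartial : ∀ i, ContDiff ℝ 1 fun y => fderiv ℝ f y (e i) := fun i =>
    (hf.fderiv_right (by norm_num)).clm_apply contDiff_const
  have hcont : ∀ {g : E → ℝ}, ContDiff ℝ 1 g → ∀ i, Continuous fun x => fderiv ℝ g x (e i) :=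
    fun hg i => (hg.continuous_fderiv one_ne_zero).clm_apply continuous_const
  have hint : ∀ i, Integrable fun x => ψ x * fderiv ℝ (fun y => fderiv ℝ f y (e i)) x (e i) :=
    fun i => (hψ.continuous.mul (hcont (hpartial i) i)).integrable_of_hasCompactSupport
      hψc.mul_right
  have hint' : ∀ i, Integrable fun x => fderiv ℝ ψ x (e i) * fderiv ℝ f x (e i) :=
    fun i => ((hcont hψ i).mul (hcont (hf.of_le one_le_two) i)).integrable_of_hasCompactSupport
      (hψc.fderiv_apply ℝ (e i)).mul_right
  calc ∫ x, lap f x * ψ x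
      = ∑ i, ∫ x, ψ x * fderiv ℝ (fun y => fderiv ℝ f y (e i)) x (e i) := by
        rw [← integral_finsetSum _ fun i _ => hint i]
        simp only [lap, mul_comm _ (ψ _), Finset.mul_sum, e]
    _ = ∑ i, -∫ x, fderiv ℝ ψ x (e i) * fderiv ℝ f x (e i) := by
        simp only [integral_mul_fderiv_eq_neg_fderiv_mul_of_hasCompactSupport hψ hψc (hpartial _)]
    _ = -∫ x, ⟪gradient f x, gradient ψ x⟫_ℝ := by
        rw [Finset.sum_neg_distrib, ← integral_finsetSum _ fun i _ => hint' i]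
        simp only [PiLp.inner_apply, RCLike.inner_apply, conj_trivial,
          gradient_apply_eq_fderiv_single, e]

theorem inner_gradient_rpow_mul_rpow_mul {u v φ : E → ℝ} {x : E} (hu : DifferentiableAt ℝ u x)
    (hv : DifferentiableAt ℝ v x) (hφ : DifferentiableAt ℝ φ x) (hu0 : u x ≠ 0) (hv0 : v x ≠ 0)
    (a b : ℝ) (w : E) :
    ⟪w, gradient (fun y => u y ^ a * v y ^ b * φ y) x⟫_ℝ =
      a * (u x ^ (a - 1) * v x ^ b * ⟪w, gradient u x⟫_ℝ * φ x)
        + (b * (u x ^ a * v x ^ (b - 1) * ⟪w, gradient v x⟫_ℝ * φ x)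
          + u x ^ a * v x ^ b * ⟪w, gradient φ x⟫_ℝ) := by
  have hD : HasFDerivAt (fun y => u y ^ a * v y ^ b * φ y) _ x :=
    ((hu.hasFDerivAt.rpow_const (p := a) (Or.inl hu0)).mul
      (hv.hasFDerivAt.rpow_const (p := b) (Or.inl hv0))).mul hφ.hasFDerivAt
  simp only [inner_gradient_right, conj_trivial, hD.fderiv, add_apply, smul_apply, smul_eq_mul,
    Pi.mul_apply]
  ring

theorem integral_neg_lap_mul_rpow_mul_rpow_mul {f u v φ : E → ℝ} (hf : ContDiff ℝ 2 f)
    (hu : ContDiff ℝ 1 u) (hv : ContDiff ℝ 1 v) (hφ : ContDiff ℝ 1 φ) (hφc : HasCompactSupport φ)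
    (hu0 : ∀ x, u x ≠ 0) (hv0 : ∀ x, v x ≠ 0) (a b : ℝ) :
    ∫ x, -lap f x * (u x ^ a * v x ^ b * φ x) =
      a * (∫ x, u x ^ (a - 1) * v x ^ b * ⟪gradient f x, gradient u x⟫_ℝ * φ x)
        + (b * (∫ x, u x ^ a * v x ^ (b - 1) * ⟪gradient f x, gradient v x⟫_ℝ * φ x)
          + ∫ x, u x ^ a * v x ^ b * ⟪gradient f x, gradient φ x⟫_ℝ) := by
  have hweight : ∀ c d : ℝ, Continuous fun x => u x ^ c * v x ^ d := fun c d =>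
    (hu.rpow_const_of_ne hu0).continuous.mul (hv.rpow_const_of_ne hv0).continuous
  have hgf := (hf.of_le one_le_two).continuous_gradient
  have hu_int : Integrable fun x =>
      u x ^ (a - 1) * v x ^ b * ⟪gradient f x, gradient u x⟫_ℝ * φ x :=
    (((hweight _ _).mul (hgf.inner hu.continuous_gradient)).mul hφ.continuous
      ).integrable_of_hasCompactSupport hφc.mul_left
  have hv_int : Integrable fun x =>
      u x ^ a * v x ^ (b - 1) * ⟪gradient f x, gradient v x⟫_ℝ * φ x :=
    (((hweight _ _).mul (hgf.inner hv.continuous_gradient)).mul hφ.continuous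
      ).integrable_of_hasCompactSupport hφc.mul_left
  have hφ_int : Integrable fun x => u x ^ a * v x ^ b * ⟪gradient f x, gradient φ x⟫_ℝ :=
    ((hweight _ _).mul (hgf.inner hφ.continuous_gradient)).integrable_of_hasCompactSupport
      (hφc.mul_inner_gradient _ _)
  have hψ : ContDiff ℝ 1 fun x => u x ^ a * v x ^ b * φ x :=
    ((hu.rpow_const_of_ne hu0).mul (hv.rpow_const_of_ne hv0)).mul hφ
  have hexpand := fun x => inner_gradient_rpow_mul_rpow_mul (hu.differentiable one_ne_zero x)
    (hv.differentiable one_ne_zero x) (hφ.differentiable one_ne_zero x) (hu0 x) (hv0 x) a b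
    (gradient f x)
  simp only [neg_mul, integral_neg, integral_lap_mul_eq_neg_integral_inner_gradient hf hψ
    hφc.mul_left, neg_neg, hexpand]
  rw [integral_add (hu_int.const_mul a) ((hv_int.const_mul b).fun_add hφ_int),
    integral_add (hv_int.const_mul b) hφ_int, integral_const_mul, integral_const_mul]

theorem integral_weighted_gradient_sq_nonneg {u v φ : E → ℝ} (hu : ContDiff ℝ 1 u)
    (hv : ContDiff ℝ 1 v) (hu0 : ∀ x, 0 < u x) (hv0 : ∀ x, 0 < v x) (hφ : Continuous φ)
    (hφc : HasCompactSupport φ) (hφ0 : ∀ x, 0 ≤ φ x) (r s θ : ℝ) :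
    0 ≤ (∫ x, u x ^ r * v x ^ s * ‖gradient u x‖ ^ 2 * φ x)
      - 2 * θ * (∫ x, u x ^ (r + 1) * v x ^ (s - 1) * ⟪gradient u x, gradient v x⟫_ℝ * φ x)
      + θ ^ 2 * (∫ x, u x ^ (r + 2) * v x ^ (s - 2) * ‖gradient v x‖ ^ 2 * φ x) := by
  have hweight : ∀ c d : ℝ, Continuous fun x => u x ^ c * v x ^ d := fun c d =>
    (hu.continuous.rpow_const fun x => .inl (hu0 x).ne').mul
      (hv.continuous.rpow_const fun x => .inl (hv0 x).ne')
  have hgu := hu.continuous_gradient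
  have hgv := hv.continuous_gradient
  have hA : Integrable fun x => u x ^ r * v x ^ s * ‖gradient u x‖ ^ 2 * φ x :=
    (((hweight _ _).mul (hgu.norm.pow 2)).mul hφ).integrable_of_hasCompactSupport hφc.mul_left
  have hJ : Integrable fun x =>
      u x ^ (r + 1) * v x ^ (s - 1) * ⟪gradient u x, gradient v x⟫_ℝ * φ x :=
    (((hweight _ _).mul (hgu.inner hgv)).mul hφ).integrable_of_hasCompactSupport hφc.mul_left
  have hB : Integrable fun x => u x ^ (r + 2) * v x ^ (s - 2) * ‖gradient v x‖ ^ 2 * φ x :=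
    (((hweight _ _).mul (hgv.norm.pow 2)).mul hφ).integrable_of_hasCompactSupport hφc.mul_left
  have hsq : ∀ x, u x ^ r * v x ^ s * ‖gradient u x‖ ^ 2 * φ x
      - 2 * θ * (u x ^ (r + 1) * v x ^ (s - 1) * ⟪gradient u x, gradient v x⟫_ℝ * φ x)
      + θ ^ 2 * (u x ^ (r + 2) * v x ^ (s - 2) * ‖gradient v x‖ ^ 2 * φ x)
      = u x ^ r * v x ^ (s - 2) * φ x * ‖v x • gradient u x - (θ * u x) • gradient v x‖ ^ 2 := by
    intro x
    have hv2 : v x ^ s = v x ^ (s - 2) * v x ^ 2 := by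
      rw [← rpow_two, ← rpow_add (hv0 x), sub_add_cancel]
    have hv1 : v x ^ (s - 1) = v x ^ (s - 2) * v x := by
      rw [← rpow_add_one (hv0 x).ne']; ring_nf
    rw [hv2, hv1, rpow_add (hu0 x), rpow_add (hu0 x), rpow_one, rpow_two, norm_sub_sq_real,
      norm_smul, norm_smul, real_inner_smul_left, real_inner_smul_right, Real.norm_eq_abs,
      Real.norm_eq_abs, mul_pow, mul_pow, sq_abs, sq_abs]
    ring
  rw [← integral_const_mul, ← integral_const_mul, ← integral_sub hA (hJ.const_mul _),
    ← integral_add (hA.sub' (hJ.const_mul _)) (hB.const_mul _)]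
  refine integral_nonneg fun x => ?_
  rw [hsq]
  have := rpow_pos_of_pos (hu0 x) r
  have := rpow_pos_of_pos (hv0 x) (s - 2)
  have := hφ0 x
  positivity

end

theorem combination_le_of_sq_form_nonneg {r s θ A J B L K : ℝ} (hr1 : r + 1 ≠ 0)
    (hr2 : r + 2 ≠ 0) (h : 0 ≤ A - 2 * θ * J + θ ^ 2 * B) :
    1 / (r + 2) * (2 * θ + s / (r + 1)) * ((r + 2) * J + ((s - 1) * B + K))
        + (-(2 * θ / (r + 2)) * K - (-(1 / (r + 1)) * L + s / ((r + 1) * (r + 2)) * K))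
      ≤ 1 / (r + 1) * ((r + 1) * A + (s * J + L))
        + (s * (s - 1) / ((r + 1) * (r + 2)) + 2 * θ / (r + 2) * (θ + s + θ * r / 2 - 1)) * B := by
  have hdiff : 1 / (r + 1) * ((r + 1) * A + (s * J + L))
        + (s * (s - 1) / ((r + 1) * (r + 2)) + 2 * θ / (r + 2) * (θ + s + θ * r / 2 - 1)) * B
      - (1 / (r + 2) * (2 * θ + s / (r + 1)) * ((r + 2) * J + ((s - 1) * B + K))
        + (-(2 * θ / (r + 2)) * K - (-(1 / (r + 1)) * L + s / ((r + 1) * (r + 2)) * K)))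
      = A - 2 * θ * J + θ ^ 2 * B := by
    field_simp
    ring
  linarith

theorem estimates_combine_general (n : ℕ) (p q r s θ : ℝ)
    (hr1 : r ≠ -1) (hr2 : r ≠ -2)
    (u v : EuclideanSpace ℝ (Fin n) → ℝ)
    (hu : ContDiff ℝ 2 u) (hv : ContDiff ℝ 2 v)
    (hu0 : ∀ x, 0 < u x) (hv0 : ∀ x, 0 < v x)
    (hue : ∀ x, -lap u x = v x ^ p) (hve : ∀ x, -lap v x = u x ^ q)
    (φ : EuclideanSpace ℝ (Fin n) → ℝ) (hφ : ContDiff ℝ 2 φ)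
    (hφc : HasCompactSupport φ) (hφ0 : ∀ x, 0 ≤ φ x) :
    (1 / (r + 1)) * (∫ x, u x ^ (r + 1) * v x ^ (p + s) * φ x)
      + (s * (s - 1) / ((r + 1) * (r + 2))
          + (2 * θ / (r + 2)) * (θ + s + θ * r / 2 - 1)) *
        (∫ x, u x ^ (r + 2) * v x ^ (s - 2) * ‖gradient v x‖ ^ 2 * φ x)
    ≥ (1 / (r + 2)) * (2 * θ + s / (r + 1)) *
        (∫ x, u x ^ (r + q + 2) * v x ^ (s - 1) * φ x)
      + ((-(2 * θ / (r + 2)) *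
          (∫ x, u x ^ (r + 2) * v x ^ (s - 1) *
            ⟪gradient v x, gradient φ x⟫_ℝ))
        - (-(1 / (r + 1)) *
            (∫ x, u x ^ (r + 1) * v x ^ s * ⟪gradient u x, gradient φ x⟫_ℝ)
          + s / ((r + 1) * (r + 2)) *
            (∫ x, u x ^ (r + 2) * v x ^ (s - 1) *
              ⟪gradient v x, gradient φ x⟫_ℝ))) := by
  have hu1 := hu.of_le one_le_two
  have hv1 := hv.of_le one_le_two
  have hφ1 := hφ.of_le one_le_two
  have hu0' := fun x => (hu0 x).ne'
  have hv0' := fun x => (hv0 x).ne'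
  have hu_test : ∫ x, u x ^ (r + 1) * v x ^ (p + s) * φ x
      = ∫ x, -lap u x * (u x ^ (r + 1) * v x ^ s * φ x) := by
    congr with x
    rw [hue, rpow_add (hv0 x)]
    ring
  have hv_test : ∫ x, u x ^ (r + q + 2) * v x ^ (s - 1) * φ x
      = ∫ x, -lap v x * (u x ^ (r + 2) * v x ^ (s - 1) * φ x) := by
    congr with x
    rw [hve, show r + q + 2 = q + (r + 2) by ring, rpow_add (hu0 x)]
    ring
  have hu_ibp := integral_neg_lap_mul_rpow_mul_rpow_mul hu hu1 hv1 hφ1 hφc hu0' hv0' (r + 1) s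
  have hv_ibp := integral_neg_lap_mul_rpow_mul_rpow_mul hv hu1 hv1 hφ1 hφc hu0' hv0' (r + 2) (s - 1)
  rw [show r + 2 - 1 = r + 1 by ring, show s - 1 - 1 = s - 2 by ring] at hv_ibp
  simp only [add_sub_cancel_right, real_inner_self_eq_norm_sq,
    real_inner_comm (gradient u _) (gradient v _)] at hu_ibp hv_ibp
  rw [ge_iff_le, hu_test, hu_ibp, hv_test, hv_ibp]
  exact combination_le_of_sq_form_nonneg (by contrapose! hr1; linarith)
    (by contrapose! hr2; linarith)
    (integral_weighted_gradient_sq_nonneg hu1 hv1 hu0 hv0 hφ.continuous hφc hφ0 r s θ)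

theorem estimates_combine (n : ℕ) (p q r s θ : ℝ) (hp : 0 < p) (hq : 0 < q)
    (hr1 : r ≠ -1) (hr2 : r ≠ -2)
    (u v : EuclideanSpace ℝ (Fin n) → ℝ)
    (hu : ContDiff ℝ 2 u) (hv : ContDiff ℝ 2 v)
    (hu0 : ∀ x, 0 < u x) (hv0 : ∀ x, 0 < v x)
    (hue : ∀ x, -lap u x = v x ^ p) (hve : ∀ x, -lap v x = u x ^ q)
    (φ : EuclideanSpace ℝ (Fin n) → ℝ) (hφ : ContDiff ℝ 2 φ)
    (hφc : HasCompactSupport φ) (hφ0 : ∀ x, 0 ≤ φ x) :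
    (1 / (r + 1)) * (∫ x, u x ^ (r + 1) * v x ^ (p + s) * φ x)
      + (s * (s - 1) / ((r + 1) * (r + 2))
          + (2 * θ / (r + 2)) * (θ + s + θ * r / 2 - 1)) *
        (∫ x, u x ^ (r + 2) * v x ^ (s - 2) * ‖gradient v x‖ ^ 2 * φ x)
    ≥ (1 / (r + 2)) * (2 * θ + s / (r + 1)) *
        (∫ x, u x ^ (r + q + 2) * v x ^ (s - 1) * φ x)
      + ((-(2 * θ / (r + 2)) *
          (∫ x, u x ^ (r + 2) * v x ^ (s - 1) *
            ⟪gradient v x, gradient φ x⟫_ℝ))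
        - (-(1 / (r + 1)) *
            (∫ x, u x ^ (r + 1) * v x ^ s * ⟪gradient u x, gradient φ x⟫_ℝ)
          + s / ((r + 1) * (r + 2)) *
            (∫ x, u x ^ (r + 2) * v x ^ (s - 1) *
              ⟪gradient v x, gradient φ x⟫_ℝ))) :=
  estimates_combine_general n p q r s θ hr1 hr2 u v hu hv hu0 hv0 hue hve φ hφ hφc hφ0
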